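/- If H is an induced subgraph of a finite simple graph G (i.e., H is the subgraph of G induced on some subset of the vertices of G), then γ_gr(H) ≤ γ_gr(G). -/

import Mathlib

/-- The closed neighborhood `N[v] = {v} ∪ N(v)` of a vertex. -/
def closedNbhd {V : Type*} (G : SimpleGraph V) (v : V) : Set V :=
  insert v (G.neighborSet v)

/-- A sequence (list) of pairwise distinct vertices is legal if each vertex
footprints some vertex not dominated by the previous ones. -/
def IsLegalSeq {V : Type*} (G : SimpleGraph V) (l : List V) : Prop :=
  l.Nodup ∧ ∀ i : Fin l.length, ∃ u,
    u ∈ closedNbhd G (l.get i) ∧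
    ∀ j : Fin l.length, (j : ℕ) < (i : ℕ) → u ∉ closedNbhd G (l.get j)

/-- A legal dominating sequence. -/
def IsDomSeq {V : Type*} (G : SimpleGraph V) (l : List V) : Prop :=
  IsLegalSeq G l ∧ ∀ u : V, ∃ v ∈ l, u ∈ closedNbhd G v

/-- The Grundy domination number: the maximum length of a legal dominating sequence. -/
noncomputable def grundyDomNum {V : Type*} (G : SimpleGraph V) : ℕ :=
  sSup {k : ℕ | ∃ l : List V, IsDomSeq G l ∧ l.length = k}

/-!
Map a legal dominating sequence of `G.induce s` into `G`. Footprints are preserved because the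
inclusion reflects adjacency, so the image is a legal sequence of `G`. A legal sequence that does
not yet dominate `G` can be prolonged by any undominated vertex, which footprints itself; since
legal sequences have distinct entries this terminates in a legal dominating sequence of `G` that
is at least as long.
-/

section

open SimpleGraph

variable {V W : Type*} {G : SimpleGraph V} {H : SimpleGraph W}

lemma self_mem_closedNbhd (G : SimpleGraph V) (v : V) : v ∈ closedNbhd G v :=
  Set.mem_insert _ _

lemma SimpleGraph.Embedding.apply_mem_closedNbhd_iff (f : H ↪g G) {u v : W} :
    f u ∈ closedNbhd G (f v) ↔ u ∈ closedNbhd H v := by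
  simp only [closedNbhd, Set.mem_insert_iff, mem_neighborSet, f.injective.eq_iff, f.map_adj_iff]

lemma IsLegalSeq.map {l : List W} (hl : IsLegalSeq H l) (f : H ↪g G) :
    IsLegalSeq G (l.map f) := by
  refine ⟨hl.1.map f.injective, fun ⟨i, hi⟩ => ?_⟩
  rw [List.length_map] at hi
  obtain ⟨u, hu, hprev⟩ := hl.2 ⟨i, hi⟩
  refine ⟨f u, by simpa [f.apply_mem_closedNbhd_iff] using hu, fun ⟨j, hj⟩ hji => ?_⟩
  rw [List.length_map] at hj
  simpa [f.apply_mem_closedNbhd_iff] using hprev ⟨j, hj⟩ hji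

lemma IsLegalSeq.append_singleton {l : List V} {u : V} (hl : IsLegalSeq G l)
    (hu : ∀ v ∈ l, u ∉ closedNbhd G v) : IsLegalSeq G (l ++ [u]) := by
  have hul : u ∉ l := fun h => hu u h (self_mem_closedNbhd G u)
  refine ⟨hl.1.append (List.nodup_singleton u) (List.disjoint_singleton.2 hul), fun ⟨i, hi⟩ => ?_⟩
  simp only [List.get_eq_getElem]
  rcases (show i < l.length ∨ i = l.length by simp at hi; omega) with hil | rfl
  · obtain ⟨w, hw, hprev⟩ := hl.2 ⟨i, hil⟩
    refine ⟨w, by simpa [List.getElem_append_left hil] using hw, fun ⟨j, hj⟩ hji => ?_⟩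
    simpa [List.getElem_append_left (hji.trans hil)] using hprev ⟨j, hji.trans hil⟩ hji
  · refine ⟨u, by simpa using self_mem_closedNbhd G u, fun ⟨j, hj⟩ hji => ?_⟩
    simpa [List.getElem_append_left hji] using hu _ (List.getElem_mem hji)

lemma IsLegalSeq.length_le_card [Finite V] {l : List V} (hl : IsLegalSeq G l) :
    l.length ≤ Nat.card V := by
  have := Fintype.ofFinite V
  simpa using hl.1.length_le_card

theorem IsLegalSeq.exists_isDomSeq_length_le [Finite V] {l : List V} (hl : IsLegalSeq G l) :
    ∃ l', IsDomSeq G l' ∧ l.length ≤ l'.length := by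
  by_cases hdom : ∀ u, ∃ v ∈ l, u ∈ closedNbhd G v
  · exact ⟨l, ⟨hl, hdom⟩, le_rfl⟩
  push Not at hdom
  obtain ⟨u, hu⟩ := hdom
  have hlu := hl.append_singleton hu
  obtain ⟨l', hl', hle⟩ := hlu.exists_isDomSeq_length_le
  exact ⟨l', hl', by simp at hle; omega⟩
termination_by Nat.card V - l.length
decreasing_by
  have := hlu.length_le_card
  simp only [List.length_append, List.length_singleton] at this ⊢
  omega

lemma IsDomSeq.length_le_grundyDomNum [Finite V] {l : List V} (hl : IsDomSeq G l) :
    l.length ≤ grundyDomNum G :=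
  le_csSup ⟨Nat.card V, fun _ ⟨_, hm, hk⟩ => hk ▸ hm.1.length_le_card⟩ ⟨l, hl, rfl⟩

end

theorem grundy_induced_subgraph_le {V : Type*} [Fintype V] (G : SimpleGraph V)
    (s : Set V) :
    grundyDomNum (G.induce s) ≤ grundyDomNum G := by
  refine csSup_le' ?_
  rintro _ ⟨l, hl, rfl⟩
  obtain ⟨l', hl', hle⟩ := (hl.1.map (SimpleGraph.Embedding.induce s)).exists_isDomSeq_length_le
  simpa using hle.trans hl'.length_le_grundyDomNum
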